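/- In the Clifford algebra of ℝ⁸ with the standard positive definite quadratic form, the element f = (1/16)·(1−e₁₂₃₄)(1−e₁₂₅₆)(1−e₁₂₇₈)(1−e₁₃₅₇) is an idempotent, and 16·f = 1 − (e₁₂₃₄ + e₁₂₅₆ + e₁₂₇₈ + e₁₃₅₇ − e₁₃₆₈ − e₁₄₅₈ − e₁₄₆₇ − e₂₃₅₈ − e₂₃₆₇ − e₂₄₅₇ + e₂₄₆₈ + e₃₄₅₆ + e₃₄₇₈ + e₅₆₇₈) + e₁₂₃₄₅₆₇₈. -/

import Mathlib

/-!
Each of the four 4-blades `A` squares to `1`, so `(1 - A) / 2` is idempotent. Any two of the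
blades share exactly two generators, hence commute, so `f` is a product of four commuting
idempotents and is itself idempotent. The expansion of `16 f` is the sign bookkeeping of
reordering generators with `eᵢ eⱼ = -eⱼ eᵢ` for `i ≠ j` and `eᵢ² = 1`.
-/

/-- The standard positive definite quadratic form on ℝ⁸. -/
noncomputable def Q8 : QuadraticForm ℝ (Fin 8 → ℝ) :=
  QuadraticMap.weightedSumSquares ℝ (fun _ : Fin 8 => (1 : ℝ))

/-- The images of the standard basis vectors in the Clifford algebra of ℝ⁸. -/
noncomputable def e8 (i : Fin 8) : CliffordAlgebra Q8 :=
  CliffordAlgebra.ι Q8 (Pi.single i 1)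

namespace QuadraticMap

variable {ι R : Type*} [Fintype ι] [DecidableEq ι] [CommSemiring R]

theorem weightedSumSquares_single (w : ι → R) (i : ι) (a : R) :
    weightedSumSquares R w (Pi.single i a) = w i * (a * a) := by
  simp [weightedSumSquares_apply, Pi.single_apply]

theorem isOrtho_weightedSumSquares_single (w : ι → R) {i j : ι} (hij : i ≠ j) (a b : R) :
    (weightedSumSquares R w).IsOrtho (Pi.single i a) (Pi.single j b) := by
  rw [isOrtho_def, weightedSumSquares_single, weightedSumSquares_single, weightedSumSquares_apply,
    Fintype.sum_eq_add _ _ hij fun k hk => by simp [hk.1, hk.2]]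
  simp [hij, hij.symm]

end QuadraticMap

theorem Commute.one_sub_one_sub {R : Type*} [Ring R] {a b : R} (h : Commute a b) :
    Commute (1 - a) (1 - b) :=
  (Commute.one_left _).sub_left ((Commute.one_right a).sub_right h)

section InvolutionIdempotent

variable {𝕜 A : Type*} [Field 𝕜] [NeZero (2 : 𝕜)] [Ring A] [Algebra 𝕜 A]

theorem isIdempotentElem_inv_two_smul_one_sub {a : A} (h : a * a = 1) :
    IsIdempotentElem ((2 : 𝕜)⁻¹ • (1 - a)) := by
  have hsq : (1 - a) * (1 - a) = (2 : 𝕜) • (1 - a) := by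
    rw [sub_mul, one_mul, mul_sub, mul_one, h, two_smul]
    abel
  rw [IsIdempotentElem, smul_mul_smul_comm, hsq, smul_smul, mul_assoc,
    inv_mul_cancel₀ two_ne_zero, mul_one]

theorem isIdempotentElem_inv_sixteen_smul_prod_one_sub {a b c d : A} (ha : a * a = 1)
    (hb : b * b = 1) (hc : c * c = 1) (hd : d * d = 1) (hab : Commute a b) (hac : Commute a c)
    (had : Commute a d) (hbc : Commute b c) (hbd : Commute b d) (hcd : Commute c d) :
    IsIdempotentElem ((16 : 𝕜)⁻¹ • ((1 - a) * (1 - b) * (1 - c) * (1 - d))) := by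
  have hsplit : (16 : 𝕜)⁻¹ • ((1 - a) * (1 - b) * (1 - c) * (1 - d)) =
      ((2 : 𝕜)⁻¹ • (1 - a)) * ((2 : 𝕜)⁻¹ • (1 - b)) * ((2 : 𝕜)⁻¹ • (1 - c)) *
        ((2 : 𝕜)⁻¹ • (1 - d)) := by
    simp only [smul_mul_smul_comm, ← mul_inv]
    norm_num
  rw [hsplit]
  have hq : ∀ {x y : A}, Commute x y →
      Commute ((2 : 𝕜)⁻¹ • (1 - x)) ((2 : 𝕜)⁻¹ • (1 - y)) :=
    fun h => (h.one_sub_one_sub.smul_left _).smul_right _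
  have hp : ∀ {x : A}, x * x = 1 → IsIdempotentElem ((2 : 𝕜)⁻¹ • (1 - x)) :=
    isIdempotentElem_inv_two_smul_one_sub
  refine .mul_of_commute ?_
    (.mul_of_commute ?_ (.mul_of_commute ?_ (hp ha) (hp hb)) (hp hc)) (hp hd)
  · exact ((hq had).mul_left (hq hbd)).mul_left (hq hcd)
  · exact (hq hac).mul_left (hq hbc)
  · exact hq hab

end InvolutionIdempotent

theorem e8_mul_self (i : Fin 8) : e8 i * e8 i = 1 := by
  rw [e8, CliffordAlgebra.ι_sq_scalar, Q8, QuadraticMap.weightedSumSquares_single, mul_one,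
    mul_one, map_one]

theorem e8_mul_self_mul (i : Fin 8) (x : CliffordAlgebra Q8) : e8 i * (e8 i * x) = x := by
  rw [← mul_assoc, e8_mul_self, one_mul]

theorem isOrtho_Q8_single {i j : Fin 8} (h : i ≠ j) :
    Q8.IsOrtho (Pi.single i 1) (Pi.single j 1) :=
  QuadraticMap.isOrtho_weightedSumSquares_single _ h _ _

/- Together with `mul_assoc`, these rules sort a word in the generators into increasing order,
cancelling equal neighbours; `decide` discharges the index comparisons. -/
theorem e8_mul_e8_of_lt {i j : Fin 8} (h : j < i) : e8 i * e8 j = -(e8 j * e8 i) :=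
  CliffordAlgebra.ι_mul_ι_comm_of_isOrtho (isOrtho_Q8_single h.ne')

theorem e8_mul_e8_mul_of_lt {i j : Fin 8} (h : j < i) (x : CliffordAlgebra Q8) :
    e8 i * (e8 j * x) = -(e8 j * (e8 i * x)) :=
  CliffordAlgebra.ι_mul_ι_mul_of_isOrtho x (isOrtho_Q8_single h.ne')

theorem spin7_blades_mul_self :
    (e8 0 * e8 1 * e8 2 * e8 3) * (e8 0 * e8 1 * e8 2 * e8 3) = 1 ∧
    (e8 0 * e8 1 * e8 4 * e8 5) * (e8 0 * e8 1 * e8 4 * e8 5) = 1 ∧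
    (e8 0 * e8 1 * e8 6 * e8 7) * (e8 0 * e8 1 * e8 6 * e8 7) = 1 ∧
    (e8 0 * e8 2 * e8 4 * e8 6) * (e8 0 * e8 2 * e8 4 * e8 6) = 1 := by
  refine ⟨?_, ?_, ?_, ?_⟩ <;>
  simp +decide only [mul_assoc, e8_mul_self, e8_mul_self_mul, e8_mul_e8_mul_of_lt, mul_neg, neg_neg]

theorem spin7_blades_commute :
    Commute (e8 0 * e8 1 * e8 2 * e8 3) (e8 0 * e8 1 * e8 4 * e8 5) ∧
    Commute (e8 0 * e8 1 * e8 2 * e8 3) (e8 0 * e8 1 * e8 6 * e8 7) ∧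
    Commute (e8 0 * e8 1 * e8 2 * e8 3) (e8 0 * e8 2 * e8 4 * e8 6) ∧
    Commute (e8 0 * e8 1 * e8 4 * e8 5) (e8 0 * e8 1 * e8 6 * e8 7) ∧
    Commute (e8 0 * e8 1 * e8 4 * e8 5) (e8 0 * e8 2 * e8 4 * e8 6) ∧
    Commute (e8 0 * e8 1 * e8 6 * e8 7) (e8 0 * e8 2 * e8 4 * e8 6) := by
  refine ⟨?_, ?_, ?_, ?_, ?_, ?_⟩ <;> rw [commute_iff_eq] <;>
  simp +decide only [mul_assoc, e8_mul_self_mul, e8_mul_e8_of_lt, e8_mul_e8_mul_of_lt,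
    mul_neg, neg_neg]

theorem spin7_expansion :
    (1 - e8 0 * e8 1 * e8 2 * e8 3) * (1 - e8 0 * e8 1 * e8 4 * e8 5) *
        (1 - e8 0 * e8 1 * e8 6 * e8 7) * (1 - e8 0 * e8 2 * e8 4 * e8 6) =
      1 - (e8 0 * e8 1 * e8 2 * e8 3 + e8 0 * e8 1 * e8 4 * e8 5 + e8 0 * e8 1 * e8 6 * e8 7
        + e8 0 * e8 2 * e8 4 * e8 6 - e8 0 * e8 2 * e8 5 * e8 7 - e8 0 * e8 3 * e8 4 * e8 7
        - e8 0 * e8 3 * e8 5 * e8 6 - e8 1 * e8 2 * e8 4 * e8 7 - e8 1 * e8 2 * e8 5 * e8 6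
        - e8 1 * e8 3 * e8 4 * e8 6 + e8 1 * e8 3 * e8 5 * e8 7 + e8 2 * e8 3 * e8 4 * e8 5
        + e8 2 * e8 3 * e8 6 * e8 7 + e8 4 * e8 5 * e8 6 * e8 7)
      + e8 0 * e8 1 * e8 2 * e8 3 * e8 4 * e8 5 * e8 6 * e8 7 := by
  simp only [mul_sub, sub_mul, mul_one, one_mul]
  simp +decide only [mul_assoc, e8_mul_self_mul, e8_mul_e8_of_lt, e8_mul_e8_mul_of_lt, mul_neg,
    neg_mul, neg_neg]
  abel

theorem spin7_idempotent_and_expansion :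
    (((1/16 : ℝ) • ((1 - e8 0 * e8 1 * e8 2 * e8 3) * (1 - e8 0 * e8 1 * e8 4 * e8 5) *
        (1 - e8 0 * e8 1 * e8 6 * e8 7) * (1 - e8 0 * e8 2 * e8 4 * e8 6))) *
      ((1/16 : ℝ) • ((1 - e8 0 * e8 1 * e8 2 * e8 3) * (1 - e8 0 * e8 1 * e8 4 * e8 5) *
        (1 - e8 0 * e8 1 * e8 6 * e8 7) * (1 - e8 0 * e8 2 * e8 4 * e8 6))) =
      (1/16 : ℝ) • ((1 - e8 0 * e8 1 * e8 2 * e8 3) * (1 - e8 0 * e8 1 * e8 4 * e8 5) *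
        (1 - e8 0 * e8 1 * e8 6 * e8 7) * (1 - e8 0 * e8 2 * e8 4 * e8 6))) ∧
    (16 : ℝ) • ((1/16 : ℝ) • ((1 - e8 0 * e8 1 * e8 2 * e8 3) * (1 - e8 0 * e8 1 * e8 4 * e8 5) *
        (1 - e8 0 * e8 1 * e8 6 * e8 7) * (1 - e8 0 * e8 2 * e8 4 * e8 6))) =
      1 - (e8 0 * e8 1 * e8 2 * e8 3 + e8 0 * e8 1 * e8 4 * e8 5 + e8 0 * e8 1 * e8 6 * e8 7
        + e8 0 * e8 2 * e8 4 * e8 6 - e8 0 * e8 2 * e8 5 * e8 7 - e8 0 * e8 3 * e8 4 * e8 7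
        - e8 0 * e8 3 * e8 5 * e8 6 - e8 1 * e8 2 * e8 4 * e8 7 - e8 1 * e8 2 * e8 5 * e8 6
        - e8 1 * e8 3 * e8 4 * e8 6 + e8 1 * e8 3 * e8 5 * e8 7 + e8 2 * e8 3 * e8 4 * e8 5
        + e8 2 * e8 3 * e8 6 * e8 7 + e8 4 * e8 5 * e8 6 * e8 7)
      + e8 0 * e8 1 * e8 2 * e8 3 * e8 4 * e8 5 * e8 6 * e8 7 := by
  obtain ⟨hA, hB, hC, hD⟩ := spin7_blades_mul_self
  obtain ⟨hAB, hAC, hAD, hBC, hBD, hCD⟩ := spin7_blades_commute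
  rw [one_div]
  refine ⟨(isIdempotentElem_inv_sixteen_smul_prod_one_sub hA hB hC hD hAB hAC hAD hBC hBD hCD).eq,
    ?_⟩
  rw [smul_smul, mul_inv_cancel₀ (by norm_num), one_smul, spin7_expansion]
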